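/- The real vector space of all functions u : 𝔻 → ℝ that are harmonic on 𝔻 and for which there exists a countable set E ⊆ ∂𝔻 such that u has nontangential limit 0 at every point of ∂𝔻 \ E, is infinite-dimensional (it contains an infinite linearly independent family). -/

import Mathlib

/-!
The Poisson kernels `P_ζ(z) = (1 - |z|²) / |ζ - z|²` at distinct points `ζₙ` of the circle form
such a family: each is the real part of the holomorphic function `(ζ + z) / (ζ - z)` on the
disk, and it extends continuously by `0` to the circle minus `{ζ}`. Along the radius towards
`ζⱼ`, the weighted kernel `(1 - |z|) P_ζ(z)` tends to `2` when `ζ = ζⱼ` and to `0` otherwise,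
which separates the terms of any finite linear combination.
-/

open Complex MeasureTheory Filter Set

noncomputable section

def unitDisk : Set ℂ := {z : ℂ | ‖z‖ < 1}

/-- `u` is harmonic on the open unit disk: twice continuously differentiable and
`Δu = 0` there. -/
def HarmonicOnDisk (u : ℂ → ℝ) : Prop :=
  ContDiffOn ℝ 2 u unitDisk ∧
  ∀ z ∈ unitDisk,
    iteratedFDeriv ℝ 2 u z ![1, 1] + iteratedFDeriv ℝ 2 u z ![Complex.I, Complex.I] = 0

/-- `u` has nontangential limit `L` at the boundary point `ζ` : for every `c > 0`,
`u z → L` as `z → ζ` within the Stolz sector `{z ∈ 𝔻 : |z - ζ| ≤ c (1 - |z|)}`. -/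
def HasNTLimit (u : ℂ → ℝ) (ζ : ℂ) (L : ℝ) : Prop :=
  ∀ c : ℝ, 0 < c →
    Filter.Tendsto u
      (nhdsWithin ζ {z : ℂ | ‖z‖ < 1 ∧ ‖z - ζ‖ ≤ c * (1 - ‖z‖)})
      (nhds L)

open InnerProductSpace Topology

instance : Nontrivial Circle :=
  ⟨⟨Circle.exp Real.pi, 1, fun h => by
    have := congrArg ((↑) : Circle → ℂ) h
    norm_num [Complex.exp_pi_mul_I] at this⟩⟩

instance : Infinite Circle := PreconnectedSpace.infinite

theorem linearIndependent_domRestrict_of_tendsto_mul {ι α 𝕜 : Type*} [Field 𝕜]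
    [TopologicalSpace 𝕜] [IsTopologicalRing 𝕜] [T2Space 𝕜] [DecidableEq ι] {s : Set α}
    {g : ι → α → 𝕜} {w : α → 𝕜} {c : ι → 𝕜} (hc : ∀ j, c j ≠ 0) (l : ι → Filter α)
    [∀ j, (l j).NeBot] (hs : ∀ j, s ∈ l j)
    (h : ∀ i j, Tendsto (fun x => w x * g i x) (l j) (𝓝 (if i = j then c j else 0))) :
    LinearIndependent 𝕜 fun i => s.domRestrict (g i) := by
  refine linearIndependent_iff'.mpr fun t a hsum j hj => ?_
  have hzero : ∀ᶠ x in l j, w x * ∑ i ∈ t, a i * g i x = 0 := by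
    filter_upwards [hs j] with x hx
    simpa using congrArg (w x * ·) (congrFun hsum ⟨x, hx⟩)
  have hlim : Tendsto (fun x => w x * ∑ i ∈ t, a i * g i x) (l j) (𝓝 (a j * c j)) := by
    simp_rw [Finset.mul_sum, mul_left_comm (w _)]
    simpa [Finset.sum_ite_eq', hj] using
      tendsto_finsetSum t fun i _ => (h i j).const_mul (a i)
  have hac : a j * c j = 0 :=
    tendsto_nhds_unique hlim (tendsto_const_nhds.congr' (hzero.mono fun _ hx => hx.symm))
  exact (mul_eq_zero.mp hac).resolve_right (hc j)

theorem ContinuousAt.hasNTLimit {u : ℂ → ℝ} {ζ : ℂ} (h : ContinuousAt u ζ) :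
    HasNTLimit u ζ (u ζ) :=
  fun _ _ => h.tendsto.mono_left nhdsWithin_le_nhds

theorem harmonicOnDisk_of_harmonicOnNhd {u : ℂ → ℝ} (hu : HarmonicOnNhd u unitDisk) :
    HarmonicOnDisk u :=
  ⟨hu.contDiffOn, fun z hz => by
    simpa [laplacian_eq_iteratedFDeriv_complexPlane] using (hu z hz).2.eq_of_nhds⟩

-- In `poissonKernel c w z`, `w` is the point of the disk and `z` the point of the circle.
theorem harmonicOnNhd_poissonKernel (c z : ℂ) :
    HarmonicOnNhd (fun w => poissonKernel c w z) {z}ᶜ := by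
  intro w hw
  have hden : z - c - (w - c) ≠ 0 := by
    rw [sub_sub_sub_cancel_right, sub_ne_zero]
    exact Ne.symm hw
  have : AnalyticAt ℂ (fun w => herglotzRieszKernel c w z) w := by
    unfold herglotzRieszKernel
    fun_prop (disch := exact hden)
  simpa [poissonKernel_eq_re_herglotzRieszKernel] using this.harmonicAt_re

theorem continuousAt_poissonKernel {c w z : ℂ} (hne : w ≠ z) :
    ContinuousAt (fun w => poissonKernel c w z) w :=
  (harmonicOnNhd_poissonKernel c z).continuousOn.continuousAt
    (isOpen_compl_singleton.mem_nhds hne)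

theorem harmonicOnDisk_poissonKernel {ζ : ℂ} (hζ : 1 ≤ ‖ζ‖) :
    HarmonicOnDisk fun z => poissonKernel 0 z ζ :=
  harmonicOnDisk_of_harmonicOnNhd <| (harmonicOnNhd_poissonKernel 0 ζ).mono
    fun z (hz : ‖z‖ < 1) hzζ => by
      rw [mem_singleton_iff.mp hzζ] at hz
      linarith

theorem poissonKernel_eq_zero_of_norm_eq {c w z : ℂ} (h : ‖w - c‖ = ‖z - c‖) :
    poissonKernel c w z = 0 := by
  simp [poissonKernel, h]

theorem hasNTLimit_poissonKernel_of_ne {ζ ξ : ℂ} (hζ : ‖ζ‖ = 1) (hξ : ‖ξ‖ = 1) (hne : ξ ≠ ζ) :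
    HasNTLimit (fun z => poissonKernel 0 z ζ) ξ 0 := by
  simpa [poissonKernel_eq_zero_of_norm_eq (c := 0) (w := ξ) (z := ζ) (by simp [hζ, hξ])]
    using (continuousAt_poissonKernel (c := 0) hne).hasNTLimit

theorem one_sub_norm_mul_poissonKernel_ofReal_mul_self {ζ : ℂ} (hζ : ‖ζ‖ = 1) {t : ℝ}
    (ht0 : 0 ≤ t) (ht1 : t < 1) :
    (1 - ‖(t : ℂ) * ζ‖) * poissonKernel 0 (t * ζ) ζ = 1 + t := by
  have hsub : ζ - t * ζ = (1 - t : ℝ) * ζ := by push_cast; ring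
  have hpos : 0 < 1 - t := sub_pos.mpr ht1
  simp only [poissonKernel, sub_zero]
  rw [hsub, norm_mul, norm_mul, hζ, Complex.norm_real, Complex.norm_real,
    Real.norm_of_nonneg ht0, Real.norm_of_nonneg hpos.le]
  field_simp
  ring

def radialApproach (ζ : ℂ) : Filter ℂ :=
  map (fun t : ℝ => (t : ℂ) * ζ) (𝓝[<] 1)

instance (ζ : ℂ) : NeBot (radialApproach ζ) := by
  unfold radialApproach
  infer_instance

theorem radialApproach_le_nhds (ζ : ℂ) : radialApproach ζ ≤ 𝓝 ζ := by
  have hcont : Continuous fun t : ℝ => (t : ℂ) * ζ := by fun_prop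
  have h := hcont.tendsto 1
  rw [Complex.ofReal_one, one_mul] at h
  exact h.mono_left nhdsWithin_le_nhds

theorem eventually_radialApproach {ζ : ℂ} {p : ℂ → Prop}
    (h : ∀ t : ℝ, 0 < t → t < 1 → p ((t : ℂ) * ζ)) : ∀ᶠ z in radialApproach ζ, p z := by
  rw [radialApproach, eventually_map]
  filter_upwards [Ioo_mem_nhdsLT one_pos] with t ht using h t ht.1 ht.2

theorem unitDisk_mem_radialApproach {ζ : ℂ} (hζ : ‖ζ‖ = 1) :
    unitDisk ∈ radialApproach ζ :=
  eventually_radialApproach fun t ht0 ht1 => by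
    simpa [unitDisk, hζ, abs_of_pos ht0] using ht1

theorem tendsto_one_sub_norm_mul_poissonKernel_radialApproach_self {ζ : ℂ} (hζ : ‖ζ‖ = 1) :
    Tendsto (fun z => (1 - ‖z‖) * poissonKernel 0 z ζ) (radialApproach ζ) (𝓝 2) := by
  have h : Tendsto (fun t : ℝ => 1 + t) (𝓝[<] 1) (𝓝 2) := by
    rw [← one_add_one_eq_two]
    exact tendsto_const_nhds.add (tendsto_id.mono_left nhdsWithin_le_nhds)
  refine tendsto_map'_iff.mpr (h.congr' ?_)
  filter_upwards [Ioo_mem_nhdsLT one_pos] with t ht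
  exact (one_sub_norm_mul_poissonKernel_ofReal_mul_self hζ ht.1.le ht.2).symm

theorem tendsto_one_sub_norm_mul_poissonKernel_radialApproach_of_ne {ζ ξ : ℂ}
    (hξ : ‖ξ‖ = 1) (hne : ξ ≠ ζ) :
    Tendsto (fun z => (1 - ‖z‖) * poissonKernel 0 z ζ) (radialApproach ξ) (𝓝 0) := by
  have hcont : ContinuousAt (fun z => (1 - ‖z‖) * poissonKernel 0 z ζ) ξ :=
    (continuous_const.sub continuous_norm).continuousAt.mul (continuousAt_poissonKernel hne)
  simpa [hξ] using hcont.tendsto.mono_left (radialApproach_le_nhds ξ)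

/-- The space of harmonic functions on the unit disk having nontangential limit `0` at
every boundary point outside some countable exceptional set is infinite dimensional:
it contains an infinite linearly independent family. -/
theorem infinite_dim_of_harmonic_with_countable_exceptional_set :
    ∃ f : ℕ → (ℂ → ℝ),
      (∀ n : ℕ, HarmonicOnDisk (f n) ∧
        ∃ E : Set ℂ, E.Countable ∧ E ⊆ {z : ℂ | ‖z‖ = 1} ∧
          ∀ ζ : ℂ, ‖ζ‖ = 1 → ζ ∉ E → HasNTLimit (f n) ζ 0) ∧
      LinearIndependent ℝ (fun n : ℕ => unitDisk.restrict (f n)) := by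
  let ζ : ℕ → ℂ := fun n => Infinite.natEmbedding Circle n
  have hζ (n : ℕ) : ‖ζ n‖ = 1 := Circle.norm_coe _
  have hζ_inj : Function.Injective ζ :=
    Circle.coe_injective.comp (Infinite.natEmbedding Circle).injective
  refine ⟨fun n z => poissonKernel 0 z (ζ n), fun n => ⟨harmonicOnDisk_poissonKernel (hζ n).ge,
    {ζ n}, countable_singleton _, by simpa using hζ n,
    fun ξ hξ hne => hasNTLimit_poissonKernel_of_ne (hζ n) hξ hne⟩, ?_⟩
  refine linearIndependent_domRestrict_of_tendsto_mul (w := fun z => 1 - ‖z‖) (c := fun _ => 2)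
    (fun _ => two_ne_zero) (fun j => radialApproach (ζ j))
    (fun j => unitDisk_mem_radialApproach (hζ j)) fun i j => ?_
  split_ifs with hij
  · subst hij
    exact tendsto_one_sub_norm_mul_poissonKernel_radialApproach_self (hζ i)
  · exact tendsto_one_sub_norm_mul_poissonKernel_radialApproach_of_ne (hζ j)
      (hζ_inj.ne (Ne.symm hij))

end
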